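/- arXiv:math/0303365 — 4 statements merged into one kernel-verified Lean document; each statement's English description precedes it below -/
import Mathlib

section
/- Let μ be an equilibrium measure of F. Then μ has no atoms (μ({a}) = 0 for every a ∈ ℂ) and the support of μ is a perfect set, i.e. it has no isolated points. -/
/-!
Suppose `μ {a} = c > 0`. Test the equilibrium property against `φ = min (log (‖z - a‖ + ε)) S`
and the normalized Lebesgue measure `ν` on a closed disk `D` with `g (f⁻¹ D) ⊆ D`, which exists
because `deg g < deg f`. On `D`, `Λⁿ φ` only sees values of `φ` on `D`, where
`φ ≥ log ‖· - a‖`. The resultant of `f - z` and `g - b` turns `Λ log ‖· - b‖` into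
`(γ + Σ_{g v = b} log ‖z - f v‖) / deg f`, with `γ` depending only on the leading coefficients,
so `Λⁿ log ‖· - a‖` is a constant bounded below in `n` plus `(deg f)⁻ⁿ` times the logarithmic
potential of the `(deg g)ⁿ` points of `Fⁿ a`. As `log ‖z‖` is locally integrable, `∫ Λⁿ φ dν`
is bounded below independently of `n` and `ε`, hence so is `∫ φ dμ`; but `φ a = log ε` gives
`∫ φ dμ ≤ S - (S - log ε) c`, which tends to `-∞` with `ε`.
A measure without atoms has no isolated points in its support.
-/

open MeasureTheory Polynomial Filter
open scoped ENNReal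

/-- The Perron–Frobenius operator of the polynomial correspondence `F = f ∘ g⁻¹`:
`Λφ(z) = (deg f)⁻¹ Σ_w φ(g(w))`, the sum running over the roots `w` of `f - z`
counted with multiplicity. -/
noncomputable def Lam (f g : Polynomial ℂ) (φ : ℂ → ℝ) : ℂ → ℝ :=
  fun z => (f.natDegree : ℝ)⁻¹ * (((f - C z).roots).map (fun w => φ (g.eval w))).sum

/-- An equilibrium measure of the correspondence `F = f ∘ g⁻¹`: a compactly supported
Borel probability measure `μ` on `ℂ` such that for every compactly supported probability
measure `ν` with bounded density with respect to Lebesgue measure and every bounded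
continuous `φ`, `∫ Λⁿφ dν → ∫ φ dμ`. -/
def IsEquilibrium (f g : Polynomial ℂ) (μ : Measure ℂ) : Prop :=
  IsProbabilityMeasure μ ∧ (∃ K : Set ℂ, IsCompact K ∧ μ Kᶜ = 0) ∧
  ∀ ν : Measure ℂ, IsProbabilityMeasure ν →
    (∃ K : Set ℂ, IsCompact K ∧ ν Kᶜ = 0) →
    (∃ h : ℂ → ℝ≥0∞, (∃ B : ℝ≥0∞, B < ⊤ ∧ ∀ z, h z ≤ B) ∧ ν = volume.withDensity h) →
    ∀ φ : ℂ → ℝ, Continuous φ → (∃ M : ℝ, ∀ z, |φ z| ≤ M) →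
      Tendsto (fun n => ∫ z, ((Lam f g)^[n] φ) z ∂ν) atTop (nhds (∫ z, φ z ∂μ))

/-- The (topological) support of a measure on `ℂ`: the set of points all of whose
neighborhoods have positive measure. -/
def measSupport (ν : Measure ℂ) : Set ℂ :=
  {z : ℂ | ∀ r : ℝ, 0 < r → 0 < ν (Metric.ball z r)}

open Metric Bornology ProbabilityTheory Real

lemma leadingCoeff_sub_C_of_natDegree_pos {R : Type*} [Ring R] {p : R[X]}
    (hp : 0 < p.natDegree) (z : R) : (p - C z).leadingCoeff = p.leadingCoeff :=
  leadingCoeff_sub_of_degree_lt (degree_C_le.trans_lt (natDegree_pos_iff_degree_pos.mp hp))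

/-- Both sides are the resultant of `f - z` and `g - b`, evaluated at the roots of either. -/
lemma leadingCoeff_pow_mul_prod_roots_eval_sub {K : Type*} [Field K] [IsAlgClosed K]
    {f g : K[X]} (hf : 0 < f.natDegree) (hg : 0 < g.natDegree) (z b : K) :
    f.leadingCoeff ^ g.natDegree * ((f - C z).roots.map fun w => g.eval w - b).prod =
      (-1) ^ (f.natDegree * g.natDegree) * g.leadingCoeff ^ f.natDegree *
        ((g - C b).roots.map fun v => f.eval v - z).prod := by
  have h₁ := resultant_eq_prod_eval (f - C z) (g - C b) g.natDegree natDegree_sub_C.le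
    (IsAlgClosed.splits _)
  have h₂ := resultant_eq_prod_eval (g - C b) (f - C z) f.natDegree natDegree_sub_C.le
    (IsAlgClosed.splits _)
  rw [natDegree_sub_C] at h₁ h₂
  rw [resultant_comm, h₂] at h₁
  simpa [leadingCoeff_sub_C_of_natDegree_pos hf, leadingCoeff_sub_C_of_natDegree_pos hg,
    mul_assoc] using h₁.symm

lemma log_norm_multiset_prod {K : Type*} [NormedField K] {s : Multiset K} (h : (0 : K) ∉ s) :
    log ‖s.prod‖ = (s.map fun x => log ‖x‖).sum := by
  have := map_multiset_prod (normHom : K →*₀ ℝ) s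
  rw [normHom_apply] at this
  rw [this, log_multiset_prod, Multiset.map_map]
  · rfl
  · simp only [Multiset.mem_map]
    rintro _ ⟨x, hx, rfl⟩
    exact norm_ne_zero_iff.mpr (ne_of_mem_of_not_mem hx h)

noncomputable def logPot (B : Multiset ℂ) (z : ℂ) : ℝ :=
  (B.map fun b => log ‖z - b‖).sum

@[simp] lemma logPot_zero : logPot 0 = 0 := by
  ext; simp [logPot]

@[simp] lemma logPot_cons (b : ℂ) (B : Multiset ℂ) (z : ℂ) :
    logPot (b ::ₘ B) z = log ‖z - b‖ + logPot B z := by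
  simp [logPot]

@[simp] lemma logPot_singleton (b z : ℂ) : logPot {b} z = log ‖z - b‖ := by
  simp [logPot]

section Correspondence

variable {f g : ℂ[X]}

/-- The image of the multiset `B` under the correspondence `F = f ∘ g⁻¹`, with multiplicities. -/
noncomputable def corrImage (f g : ℂ[X]) (B : Multiset ℂ) : Multiset ℂ :=
  B.bind fun b => (g - C b).roots.map f.eval

lemma corrImage_singleton (b : ℂ) : corrImage f g {b} = (g - C b).roots.map f.eval :=
  Multiset.singleton_bind _ _

lemma mem_corrImage {B : Multiset ℂ} {z : ℂ} :
    z ∈ corrImage f g B ↔ ∃ b ∈ B, z ∈ corrImage f g {b} := by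
  simp only [corrImage, Multiset.mem_bind, Multiset.singleton_bind]

lemma card_corrImage (B : Multiset ℂ) :
    Multiset.card (corrImage f g B) = g.natDegree * Multiset.card B := by
  simp [corrImage, Multiset.card_bind, IsAlgClosed.card_roots_eq_natDegree, mul_comm]

lemma card_corrImage_iterate (n : ℕ) (a : ℂ) :
    Multiset.card ((corrImage f g)^[n] {a}) = g.natDegree ^ n := by
  induction n with
  | zero => simp
  | succ n ih => rw [Function.iterate_succ_apply', card_corrImage, ih, pow_succ']

lemma logPot_corrImage (B : Multiset ℂ) (z : ℂ) :
    logPot (corrImage f g B) z = (B.map fun b => logPot (corrImage f g {b}) z).sum := by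
  simp only [logPot, corrImage, Multiset.map_bind, Multiset.sum_bind, Multiset.singleton_bind]

lemma eval_notMem_of_notMem_corrImage (hg : 0 < g.natDegree) {B : Multiset ℂ} {z w : ℂ}
    (hz : z ∉ corrImage f g B) (hw : w ∈ (f - C z).roots) : g.eval w ∉ B := fun hB => by
  refine hz (mem_corrImage.mpr ⟨_, hB, ?_⟩)
  rw [corrImage_singleton, Multiset.mem_map]
  exact ⟨w, (mem_roots_sub_C (natDegree_pos_iff_degree_pos.mp hg)).mpr rfl,
    (mem_roots_sub_C'.mp hw).2⟩

noncomputable def logLeadingRatio (f g : ℂ[X]) : ℝ :=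
  f.natDegree * log ‖g.leadingCoeff‖ - g.natDegree * log ‖f.leadingCoeff‖

lemma sum_log_norm_eval_sub (hf : 0 < f.natDegree) (hg : 0 < g.natDegree) {z b : ℂ}
    (hz : z ∉ corrImage f g {b}) :
    ((f - C z).roots.map fun w => log ‖g.eval w - b‖).sum =
      logLeadingRatio f g + logPot (corrImage f g {b}) z := by
  have hf₀ : f.leadingCoeff ≠ 0 := leadingCoeff_ne_zero.mpr (ne_zero_of_natDegree_gt hf)
  have hg₀ : g.leadingCoeff ≠ 0 := leadingCoeff_ne_zero.mpr (ne_zero_of_natDegree_gt hg)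
  set P := (f - C z).roots.map fun w => g.eval w - b
  set Q := (g - C b).roots.map fun v => f.eval v - z
  have hres := leadingCoeff_pow_mul_prod_roots_eval_sub hf hg z b
  have hQ : (0 : ℂ) ∉ Q := by
    simpa [Q, corrImage_singleton, sub_eq_zero] using hz
  have hP : (0 : ℂ) ∉ P := fun h0 => by
    have : f.leadingCoeff ^ g.natDegree * P.prod ≠ 0 := by
      rw [hres]
      exact mul_ne_zero (by simp [hg₀]) (Multiset.prod_ne_zero hQ)
    exact this (by rw [Multiset.prod_eq_zero h0, mul_zero])
  have hlog := congrArg (fun x => log ‖x‖) hres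
  simp only [norm_mul, norm_pow, norm_neg, norm_one, one_pow, one_mul] at hlog
  rw [log_mul (pow_ne_zero _ (norm_ne_zero_iff.mpr hf₀))
      (norm_ne_zero_iff.mpr (Multiset.prod_ne_zero hP)),
    log_mul (pow_ne_zero _ (norm_ne_zero_iff.mpr hg₀))
      (norm_ne_zero_iff.mpr (Multiset.prod_ne_zero hQ)), log_pow, log_pow,
    log_norm_multiset_prod hP, log_norm_multiset_prod hQ, Multiset.map_map,
    Multiset.map_map] at hlog
  simp only [logLeadingRatio, logPot, corrImage_singleton, Multiset.map_map, Function.comp_def,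
    norm_sub_rev z] at hlog ⊢
  linarith

lemma le_Lam_of_le_logPot (hf : 0 < f.natDegree) (hg : 0 < g.natDegree) {h : ℂ → ℝ}
    {B : Multiset ℂ} {c s : ℝ} (hB : ∀ x ∉ B, c + s * logPot B x ≤ h x) {z : ℂ}
    (hz : z ∉ corrImage f g B) :
    c + s / f.natDegree * (Multiset.card B * logLeadingRatio f g + logPot (corrImage f g B) z)
      ≤ Lam f g h z := by
  set W := (f - C z).roots
  have hW : Multiset.card W = f.natDegree :=
    IsAlgClosed.card_roots_eq_natDegree.trans natDegree_sub_C
  have hd : (0 : ℝ) < f.natDegree := by exact_mod_cast hf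
  have hsum : (W.map fun w => c + s * logPot B (g.eval w)).sum
      ≤ (W.map fun w => h (g.eval w)).sum :=
    Multiset.sum_map_le_sum_map _ _ fun w hw => hB _ (eval_notMem_of_notMem_corrImage hg hz hw)
  have hswap : (W.map fun w => logPot B (g.eval w)).sum =
      Multiset.card B * logLeadingRatio f g + logPot (corrImage f g B) z := by
    calc (W.map fun w => logPot B (g.eval w)).sum
        = (B.map fun b => (W.map fun w => log ‖g.eval w - b‖).sum).sum :=
          Multiset.sum_map_sum_map _ _
      _ = (B.map fun b => logLeadingRatio f g + logPot (corrImage f g {b}) z).sum :=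
          congrArg _ <| Multiset.map_congr rfl fun b hb =>
            sum_log_norm_eval_sub hf hg fun h => hz (mem_corrImage.mpr ⟨b, hb, h⟩)
      _ = _ := by
          rw [Multiset.sum_map_add, Multiset.map_const', Multiset.sum_replicate, nsmul_eq_mul,
            logPot_corrImage]
  rw [Multiset.sum_map_add, Multiset.sum_map_mul_left, Multiset.map_const',
    Multiset.sum_replicate, hW, nsmul_eq_mul, hswap] at hsum
  rw [Lam]
  calc c + s / f.natDegree * (Multiset.card B * logLeadingRatio f g + logPot (corrImage f g B) z)
      = (f.natDegree : ℝ)⁻¹ * (f.natDegree * c + s * (Multiset.card B * logLeadingRatio f g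
          + logPot (corrImage f g B) z)) := by field_simp
    _ ≤ _ := mul_le_mul_of_nonneg_left hsum (by positivity)

lemma le_Lam_iterate (hf : 0 < f.natDegree) (hg : 0 < g.natDegree) {a : ℂ} {ψ : ℂ → ℝ}
    (hψ : ∀ x ≠ a, log ‖x - a‖ ≤ ψ x) (n : ℕ) {z : ℂ} (hz : z ∉ (corrImage f g)^[n] {a}) :
    logLeadingRatio f g / f.natDegree *
        ∑ i ∈ Finset.range n, ((g.natDegree : ℝ) / f.natDegree) ^ i
      + ((f.natDegree : ℝ) ^ n)⁻¹ * logPot ((corrImage f g)^[n] {a}) z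
      ≤ (Lam f g)^[n] ψ z := by
  induction n generalizing z with
  | zero =>
    simpa using hψ z (by simpa using hz)
  | succ n ih =>
    rw [Function.iterate_succ_apply'] at hz
    rw [Function.iterate_succ_apply', Function.iterate_succ_apply']
    convert le_Lam_of_le_logPot hf hg (fun x hx => ih hx) hz using 1
    rw [card_corrImage_iterate, Finset.sum_range_succ, div_pow]
    generalize ∑ i ∈ Finset.range n, ((g.natDegree : ℝ) / f.natDegree) ^ i = S
    have hd : (f.natDegree : ℝ) ≠ 0 := by positivity
    push_cast
    field_simp
    ring

end Correspondence

section Invariance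

variable {f g : ℂ[X]} {D : Set ℂ}

lemma Lam_eqOn (hD : (f.eval ·) ⁻¹' D ⊆ (g.eval ·) ⁻¹' D) {φ₁ φ₂ : ℂ → ℝ}
    (h : Set.EqOn φ₁ φ₂ D) : Set.EqOn (Lam f g φ₁) (Lam f g φ₂) D := fun z hz => by
  simp only [Lam]
  congr 2
  refine Multiset.map_congr rfl fun w hw => h (hD ?_)
  rwa [Set.mem_preimage, (mem_roots_sub_C'.mp hw).2]

lemma Lam_iterate_eqOn (hD : (f.eval ·) ⁻¹' D ⊆ (g.eval ·) ⁻¹' D) {φ₁ φ₂ : ℂ → ℝ}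
    (h : Set.EqOn φ₁ φ₂ D) (n : ℕ) : Set.EqOn ((Lam f g)^[n] φ₁) ((Lam f g)^[n] φ₂) D := by
  induction n with
  | zero => exact h
  | succ n ih =>
    simp only [Function.iterate_succ_apply']
    exact Lam_eqOn hD ih

lemma eventually_preimage_closedBall_subset (h : g.degree < f.degree) :
    ∀ᶠ R in atTop, (f.eval ·) ⁻¹' closedBall 0 R ⊆ (g.eval ·) ⁻¹' closedBall 0 R := by
  have hbad : IsBounded {w | ‖f.eval w‖ < ‖g.eval w‖} := by
    rw [isBounded_def]
    filter_upwards [(isLittleO_cobounded_of_degree_lt h).bound one_pos] with w hw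
    simpa using hw
  obtain ⟨C, hC⟩ :=
    hbad.isCompact_closure.exists_bound_of_continuousOn g.continuous.continuousOn
  filter_upwards [eventually_ge_atTop C] with R hR w hw
  simp only [Set.mem_preimage, mem_closedBall_zero_iff] at hw ⊢
  by_cases hw' : ‖f.eval w‖ < ‖g.eval w‖
  · exact (hC w (subset_closure hw')).trans hR
  · exact (not_lt.mp hw').trans hw

end Invariance

lemma integrable_posLog_inv_norm : Integrable (fun z : ℂ => log⁺ ‖z‖⁻¹) := by
  have hzero : ∀ z : ℂ, z ∉ ball (0 : ℂ) 1 → log⁺ ‖z‖⁻¹ = 0 := by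
    intro z hz
    rw [mem_ball_zero_iff, not_lt] at hz
    rw [posLog_eq_zero_iff, abs_inv, abs_norm]
    exact inv_le_one_of_one_le₀ hz
  rw [← integrableOn_iff_integrable_of_support_subset
    (fun z hz => by_contra fun h => hz (hzero z h))]
  refine integrableOn_ball_of_norm_le_rpow (α := 1) (C := 1) (by simp) (by simp) ?_ (by fun_prop)
  refine Eventually.of_forall fun z => ?_
  rw [rpow_neg_one, one_mul, norm_of_nonneg posLog_nonneg]
  exact max_le (by positivity) (log_le_self (by positivity))

lemma neg_posLog_inv_le_log (x : ℝ) : -log⁺ x⁻¹ ≤ log x := by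
  rw [← posLog_sub_posLog_inv]
  linarith [posLog_nonneg (x := x)]

section BoundedSet

variable {s : Set ℂ}

lemma integrableOn_log_norm_sub (hs : IsBounded s) (b : ℂ) :
    IntegrableOn (fun z => log ‖z - b‖) s := by
  simp_rw [← posLog_sub_posLog_inv]
  refine IntegrableOn.sub ?_ (integrable_posLog_inv_norm.comp_sub_right b).integrableOn
  exact ((by fun_prop : Continuous fun z : ℂ => log⁺ ‖z - b‖).continuousOn.integrableOn_compact
    hs.isCompact_closure).mono_set subset_closure

lemma neg_integral_posLog_inv_norm_le_setIntegral (hs : IsBounded s) (b : ℂ) :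
    -∫ z : ℂ, log⁺ ‖z‖⁻¹ ≤ ∫ z in s, log ‖z - b‖ := by
  have hint := integrable_posLog_inv_norm.comp_sub_right b
  calc -∫ z : ℂ, log⁺ ‖z‖⁻¹ = -∫ z : ℂ, log⁺ ‖z - b‖⁻¹ := by
        rw [integral_sub_right_eq_self (fun z : ℂ => log⁺ ‖z‖⁻¹)]
    _ ≤ -∫ z in s, log⁺ ‖z - b‖⁻¹ :=
        neg_le_neg (setIntegral_le_integral hint (.of_forall fun _ => posLog_nonneg))
    _ = ∫ z in s, -log⁺ ‖z - b‖⁻¹ := (integral_neg _).symm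
    _ ≤ ∫ z in s, log ‖z - b‖ :=
        integral_mono hint.integrableOn.neg (integrableOn_log_norm_sub hs b)
          fun z => neg_posLog_inv_le_log _

lemma integrable_log_norm_sub_cond (hs : IsBounded s) (hs₀ : volume s ≠ 0) (b : ℂ) :
    Integrable (fun z => log ‖z - b‖) volume[|s] :=
  (integrableOn_log_norm_sub hs b).smul_measure (ENNReal.inv_ne_top.mpr hs₀)

lemma neg_le_integral_log_norm_sub_cond (hs : IsBounded s) (b : ℂ) :
    -((volume.real s)⁻¹ * ∫ z : ℂ, log⁺ ‖z‖⁻¹) ≤ ∫ z, log ‖z - b‖ ∂volume[|s] := by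
  rw [ProbabilityTheory.cond, integral_smul_measure, ENNReal.toReal_inv, smul_eq_mul, ← mul_neg]
  exact mul_le_mul_of_nonneg_left (neg_integral_posLog_inv_norm_le_setIntegral hs b)
    (by positivity)

end BoundedSet

section Potential

variable {ν : Measure ℂ}

lemma integrable_logPot (hint : ∀ b, Integrable (fun z => log ‖z - b‖) ν) (B : Multiset ℂ) :
    Integrable (logPot B) ν := by
  induction B using Multiset.induction_on with
  | empty => simp
  | cons b B ih => exact ((hint b).add ih).congr (.of_forall fun z => (logPot_cons b B z).symm)

lemma neg_le_integral_logPot (hint : ∀ b, Integrable (fun z => log ‖z - b‖) ν) {C : ℝ}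
    (hC : ∀ b, -C ≤ ∫ z, log ‖z - b‖ ∂ν) (B : Multiset ℂ) :
    -(Multiset.card B * C) ≤ ∫ z, logPot B z ∂ν := by
  induction B using Multiset.induction_on with
  | empty => simp
  | cons b B ih =>
    simp only [logPot_cons, integral_add (hint b) (integrable_logPot hint B), Multiset.card_cons]
    push_cast
    linarith [hC b]

lemma le_integral_of_ae_le_logPot [IsProbabilityMeasure ν]
    (hint : ∀ b, Integrable (fun z => log ‖z - b‖) ν) {C : ℝ}
    (hC : ∀ b, -C ≤ ∫ z, log ‖z - b‖ ∂ν) {h : ℂ → ℝ} (hh : Integrable h ν) {B : Multiset ℂ}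
    {c s : ℝ} (hs : 0 ≤ s) (hle : ∀ᵐ z ∂ν, c + s * logPot B z ≤ h z) :
    c - s * (Multiset.card B * C) ≤ ∫ z, h z ∂ν := by
  have hint_B := (integrable_const c).add ((integrable_logPot hint B).const_mul s)
  calc c - s * (Multiset.card B * C) = c + s * -(Multiset.card B * C) := by ring
    _ ≤ c + s * ∫ z, logPot B z ∂ν := by gcongr; exact neg_le_integral_logPot hint hC B
    _ = ∫ z, (c + s * logPot B z) ∂ν := by
        rw [integral_add (integrable_const c) ((integrable_logPot hint B).const_mul s),
          integral_const, integral_const_mul]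
        simp
    _ ≤ ∫ z, h z ∂ν := integral_mono_ae hint_B hh hle

end Potential

lemma neg_le_mul_geom_sum (c : ℝ) {r : ℝ} (hr₀ : 0 ≤ r) (hr₁ : r < 1) (n : ℕ) :
    -(|c| / (1 - r)) ≤ c * ∑ i ∈ Finset.range n, r ^ i := by
  have hsum := geom_sum_Ico_le_of_lt_one (m := 0) (n := n) hr₀ hr₁
  rw [pow_zero, ← Finset.range_eq_Ico] at hsum
  have hnonneg : 0 ≤ ∑ i ∈ Finset.range n, r ^ i := Finset.sum_nonneg fun i _ => by positivity
  calc -(|c| / (1 - r)) = -|c| * (1 / (1 - r)) := by ring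
    _ ≤ -|c| * ∑ i ∈ Finset.range n, r ^ i :=
        mul_le_mul_of_nonpos_left hsum (neg_nonpos.mpr (abs_nonneg c))
    _ ≤ c * ∑ i ∈ Finset.range n, r ^ i :=
        mul_le_mul_of_nonneg_right (neg_abs_le c) hnonneg

lemma exists_forall_neg_le_integral_Lam_iterate {f g : ℂ[X]} (hg : 0 < g.natDegree)
    (hgf : g.natDegree < f.natDegree) {R : ℝ} (hR : 0 < R)
    (hD : (f.eval ·) ⁻¹' closedBall 0 R ⊆ (g.eval ·) ⁻¹' closedBall 0 R) :
    ∃ K, 0 ≤ K ∧ ∀ (a : ℂ) (ψ φ : ℂ → ℝ), (∀ x ≠ a, log ‖x - a‖ ≤ ψ x) →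
      Set.EqOn φ ψ (closedBall 0 R) →
        ∀ n, -K ≤ ∫ z, (Lam f g)^[n] φ z ∂volume[|closedBall 0 R] := by
  set s := closedBall (0 : ℂ) R
  have hs : IsBounded s := isBounded_closedBall
  have hs₀ : volume s ≠ 0 := (measure_closedBall_pos volume 0 hR).ne'
  have : IsProbabilityMeasure volume[|s] :=
    cond_isProbabilityMeasure_of_finite hs₀ hs.measure_lt_top.ne
  have hf : 0 < f.natDegree := hg.trans hgf
  have hd : (0 : ℝ) < f.natDegree := by exact_mod_cast hf
  set r : ℝ := g.natDegree / f.natDegree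
  have hr₀ : 0 ≤ r := by positivity
  have hr₁ : r < 1 := (div_lt_one hd).mpr (by exact_mod_cast hgf)
  have hr₁' : 0 < 1 - r := sub_pos.mpr hr₁
  set c := logLeadingRatio f g / f.natDegree
  set C₀ := (volume.real s)⁻¹ * ∫ z : ℂ, log⁺ ‖z‖⁻¹
  have hC₀ : 0 ≤ C₀ := mul_nonneg (by positivity) (integral_nonneg fun _ => posLog_nonneg)
  refine ⟨|c| / (1 - r) + C₀, by positivity, fun a ψ φ hψ hφ n => ?_⟩
  set B := (corrImage f g)^[n] {a}
  by_cases hint : Integrable ((Lam f g)^[n] φ) volume[|s]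
  swap
  -- the integral of a non-integrable function is `0`
  · rw [integral_undef hint, neg_nonpos]
    positivity
  have hlog := integrable_log_norm_sub_cond hs hs₀
  have hae : ∀ᵐ z ∂volume[|s],
      c * ∑ i ∈ Finset.range n, r ^ i + ((f.natDegree : ℝ) ^ n)⁻¹ * logPot B z
        ≤ (Lam f g)^[n] φ z := by
    have hB : ∀ᵐ z ∂volume[|s], z ∉ B := measure_eq_zero_iff_ae_notMem.mp
      (cond_absolutelyContinuous (B.finite_toSet.measure_zero volume))
    filter_upwards [ae_cond_mem measurableSet_closedBall, hB] with z hzs hzB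
    rw [Lam_iterate_eqOn hD hφ n hzs]
    exact le_Lam_iterate hf hg hψ n hzB
  have hint_le := le_integral_of_ae_le_logPot hlog (neg_le_integral_log_norm_sub_cond hs) hint
    (by positivity) hae
  rw [card_corrImage_iterate] at hint_le
  have hrn : r ^ n ≤ 1 := pow_le_one₀ hr₀ hr₁.le
  have hpow : ((f.natDegree : ℝ) ^ n)⁻¹ * ((g.natDegree ^ n : ℕ) * C₀) = r ^ n * C₀ := by
    push_cast
    rw [div_pow]
    field_simp
  nlinarith [neg_le_mul_geom_sum c hr₀ hr₁ n]

lemma IsEquilibrium.tendsto_integral_cond {f g : ℂ[X]} {μ : Measure ℂ}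
    (hμ : IsEquilibrium f g μ) {s : Set ℂ} (hs : IsBounded s) (hsm : MeasurableSet s)
    (hs₀ : volume s ≠ 0) {φ : ℂ → ℝ} (hφ : Continuous φ) (hφb : ∃ M, ∀ z, |φ z| ≤ M) :
    Tendsto (fun n => ∫ z, (Lam f g)^[n] φ z ∂volume[|s]) atTop (nhds (∫ z, φ z ∂μ)) := by
  refine hμ.2.2 _ (cond_isProbabilityMeasure_of_finite hs₀ hs.measure_lt_top.ne)
    ⟨closure s, hs.isCompact_closure, ?_⟩
    ⟨s.indicator fun _ => (volume s)⁻¹, ⟨(volume s)⁻¹,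
      ENNReal.inv_lt_top.mpr (pos_iff_ne_zero.mpr hs₀),
      fun z => Set.indicator_le_self' (fun _ _ => zero_le) z⟩, ?_⟩ φ hφ hφb
  · rw [cond_apply hsm, ← Set.sdiff_eq, Set.sdiff_eq_empty.mpr subset_closure, measure_empty,
      mul_zero]
  · rw [withDensity_indicator hsm, withDensity_const]
    rfl

lemma integral_le_sub_mul_measureReal_singleton {α : Type*} [MeasurableSpace α]
    [MeasurableSingletonClass α] {μ : Measure α} [IsProbabilityMeasure μ] {φ : α → ℝ}
    (hφ : Integrable φ μ) {S t : ℝ} {a : α} (hS : ∀ z, φ z ≤ S) (ht : φ a ≤ t) :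
    ∫ z, φ z ∂μ ≤ S - (S - t) * μ.real {a} := by
  have hind := (integrable_const (S - t)).indicator (μ := μ) (measurableSet_singleton a)
  calc ∫ z, φ z ∂μ ≤ ∫ z, (S - ({a} : Set α).indicator (fun _ => S - t) z) ∂μ := by
        refine integral_mono hφ ((integrable_const S).sub hind) fun z => ?_
        by_cases hz : z = a
        · subst hz
          simp only [Set.indicator_of_mem (Set.mem_singleton z)]
          linarith
        · simp [hz, hS z]
    _ = S - (S - t) * μ.real {a} := by
        rw [integral_sub (integrable_const S) hind, integral_indicator_const _
          (measurableSet_singleton a), integral_const]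
        simp [mul_comm]

lemma IsEquilibrium.exists_forall_neg_le_integral {f g : ℂ[X]} (hdeg : g.degree < f.degree)
    (hg : 1 ≤ g.degree) {μ : Measure ℂ} (hμ : IsEquilibrium f g μ) :
    ∃ K R, 0 ≤ K ∧ 0 < R ∧ ∀ (a : ℂ) (ψ φ : ℂ → ℝ), (∀ x ≠ a, log ‖x - a‖ ≤ ψ x) →
      Set.EqOn φ ψ (closedBall 0 R) → Continuous φ → (∃ M, ∀ x, |φ x| ≤ M) →
        -K ≤ ∫ x, φ x ∂μ := by
  have hg₀ : 0 < g.natDegree := natDegree_pos_iff_degree_pos.mpr (zero_lt_one.trans_le hg)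
  have hgf : g.natDegree < f.natDegree :=
    natDegree_lt_natDegree (ne_zero_of_coe_le_degree hg) hdeg
  obtain ⟨R, hR, hD⟩ :=
    ((eventually_gt_atTop 0).and (eventually_preimage_closedBall_subset hdeg)).exists
  obtain ⟨K, hK, hlow⟩ := exists_forall_neg_le_integral_Lam_iterate hg₀ hgf hR hD
  refine ⟨K, R, hK, hR, fun a ψ φ hψ hφψ hφ hφ_bdd => ?_⟩
  exact ge_of_tendsto' (hμ.tendsto_integral_cond isBounded_closedBall measurableSet_closedBall
    (measure_closedBall_pos volume 0 hR).ne' hφ hφ_bdd) (hlow a ψ φ hψ hφψ)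

lemma IsEquilibrium.measure_singleton {f g : ℂ[X]} (hdeg : g.degree < f.degree)
    (hg : 1 ≤ g.degree) {μ : Measure ℂ} (hμ : IsEquilibrium f g μ) (a : ℂ) : μ {a} = 0 := by
  have := hμ.1
  obtain ⟨K, R, hK, hR, hlow⟩ := hμ.exists_forall_neg_le_integral hdeg hg
  by_contra hne
  have hc : 0 < μ.real {a} := ENNReal.toReal_pos hne (measure_ne_top μ _)
  set S := log (R + ‖a‖ + 1)
  have hS : 0 ≤ S := log_nonneg (by linarith [norm_nonneg a])
  set M := (S + K) / μ.real {a} + 1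
  have hM : 0 < M := by positivity
  set ψ : ℂ → ℝ := fun x => log (‖x - a‖ + exp (-M))
  set φ : ℂ → ℝ := fun x => min (ψ x) S
  have hψ₀ : ∀ x, 0 < ‖x - a‖ + exp (-M) := fun x => by positivity
  have hψ : ∀ x ≠ a, log ‖x - a‖ ≤ ψ x := fun x hx =>
    log_le_log (norm_pos_iff.mpr (sub_ne_zero.mpr hx)) (le_add_of_nonneg_right (exp_pos _).le)
  have hφψ : Set.EqOn φ ψ (closedBall 0 R) := fun x hx => by
    refine min_eq_left (log_le_log (hψ₀ x) ?_)
    have := exp_le_one_iff.mpr (neg_nonpos.mpr hM.le)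
    linarith [norm_sub_le x a, mem_closedBall_zero_iff.mp hx]
  have hφ : Continuous φ :=
    (Continuous.log (by fun_prop) fun x => (hψ₀ x).ne').min continuous_const
  have hφ_bdd : ∀ x, |φ x| ≤ S + M := fun x => by
    have : -M ≤ ψ x := by
      rw [← log_exp (-M)]
      exact log_le_log (exp_pos _) (le_add_of_nonneg_left (norm_nonneg _))
    exact abs_le.mpr ⟨le_min (by linarith) (by linarith), (min_le_right _ _).trans (by linarith)⟩
  have hup : ∫ x, φ x ∂μ ≤ S - (S + M) * μ.real {a} := by
    simpa using integral_le_sub_mul_measureReal_singleton (t := -M)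
      (Integrable.of_bound hφ.aestronglyMeasurable _ (.of_forall hφ_bdd))
      (fun x => min_le_right _ _) ((min_le_left _ _).trans (by simp [ψ]))
  have hSM : (S + M) * μ.real {a} = S * μ.real {a} + (S + K) + μ.real {a} := by
    simp only [M]
    field_simp
    ring
  nlinarith [hlow a ψ φ hψ hφψ hφ ⟨_, hφ_bdd⟩]

lemma measSupport_eq_support (μ : Measure ℂ) : measSupport μ = μ.support := by
  ext z
  exact nhds_basis_ball.mem_measureSupport.symm

lemma MeasureTheory.Measure.exists_mem_support_ne_dist_lt {X : Type*} [PseudoMetricSpace X]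
    [MeasurableSpace X] [HereditarilyLindelofSpace X] {μ : Measure X} [NullSingletonClass μ]
    {z : X} (hz : z ∈ μ.support) {r : ℝ} (hr : 0 < r) :
    ∃ w ∈ μ.support, w ≠ z ∧ dist w z < r := by
  by_contra! h
  have hball : ball z r ⊆ {z} ∪ μ.supportᶜ := fun w hw => by
    by_cases hwz : w = z
    · exact .inl hwz
    · exact .inr fun hw' => (h w hw' hwz).not_gt hw
  refine ((nhds_basis_ball.mem_measureSupport.mp hz) r hr).ne' (measure_mono_null hball ?_)
  exact measure_union_null (measure_singleton z) measure_compl_support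

theorem equilibrium_measure_no_atoms_support_perfect
    (f g : Polynomial ℂ) (hdeg : g.degree < f.degree) (hg : 1 ≤ g.degree)
    (μ : Measure ℂ) (hμ : IsEquilibrium f g μ) :
    (∀ a : ℂ, μ {a} = 0) ∧
    (∀ z ∈ measSupport μ, ∀ r : ℝ, 0 < r →
      ∃ w ∈ measSupport μ, w ≠ z ∧ dist w z < r) := by
  have hatoms : ∀ a, μ {a} = 0 := hμ.measure_singleton hdeg hg
  have : NullSingletonClass μ := ⟨hatoms⟩
  refine ⟨hatoms, fun z hz r hr => ?_⟩
  rw [measSupport_eq_support] at hz ⊢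
  exact Measure.exists_mem_support_ne_dist_lt hz hr
end

section
/- For every ε ∈ (0,1) there exists δ ∈ (0,1) such that for every function h holomorphic on the open unit disc D ⊂ ℂ with Re h(z) ≤ 1 for all z ∈ D, if Re h(z₀) = 0 for some z₀ with |z₀| ≤ δ, then Re h(z) ≤ ε for all z with |z| ≤ δ. -/
/-!
Borel–Carathéodory on the disc of radius `1 - δ` about `z₀` bounds `‖h z - h z₀‖` by
`4δ / (1 - 3δ)`, and `Re h z = Re (h z - h z₀)` because `Re h z₀ = 0`.
-/

open Metric

namespace Complex

variable {f : ℂ → ℂ} {c z : ℂ} {M R : ℝ}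

theorem borelCaratheodory_sub (hM : 0 < M) (hf : DifferentiableOn ℂ f (ball c R))
    (hre : ∀ w ∈ ball c R, (f w - f c).re ≤ M) (hz : z ∈ ball c R) :
    ‖f z - f c‖ ≤ 2 * M * dist z c / (R - dist z c) := by
  have hR : 0 < R := pos_of_mem_ball hz
  have hzc : z - c ∈ ball 0 R := by rwa [mem_ball_zero_iff, ← dist_eq_norm]
  have hshift : Set.MapsTo (· + c) (ball 0 R) (ball c R) := fun w hw ↦ by
    rwa [mem_ball, dist_eq_norm, add_sub_cancel_right, ← mem_ball_zero_iff]
  have hshifted := borelCaratheodory_zero (f := fun w ↦ f (w + c) - f c) hM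
    ((hf.comp (by fun_prop) hshift).sub_const _) (fun w hw ↦ hre _ (hshift hw)) hR hzc
    (by simp)
  simpa only [sub_add_cancel, ← dist_eq_norm] using hshifted

theorem re_le_of_re_le_one_of_re_eq_zero {δ : ℝ} (hδ : δ < 1 / 3)
    (hf : DifferentiableOn ℂ f (ball 0 1)) (hre : ∀ w ∈ ball (0 : ℂ) 1, (f w).re ≤ 1)
    {z₀ : ℂ} (hz₀ : ‖z₀‖ ≤ δ) (hfz₀ : (f z₀).re = 0) (hz : ‖z‖ ≤ δ) :
    (f z).re ≤ 4 * δ / (1 - 3 * δ) := by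
  have hsub : ball z₀ (1 - δ) ⊆ ball 0 1 :=
    ball_subset_ball' (by rw [dist_zero_right]; linarith)
  have hdist : dist z z₀ ≤ 2 * δ := by
    rw [dist_eq_norm]; linarith [norm_sub_le z z₀]
  have hzmem : z ∈ ball z₀ (1 - δ) := by rw [mem_ball]; linarith
  have hbc := borelCaratheodory_sub one_pos (hf.mono hsub)
    (fun w hw ↦ by simpa [hfz₀] using hre w (hsub hw)) hzmem
  calc (f z).re = (f z - f z₀).re := by simp [hfz₀]
    _ ≤ ‖f z - f z₀‖ := re_le_norm _
    _ ≤ 2 * 1 * dist z z₀ / (1 - δ - dist z z₀) := hbc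
    _ ≤ 2 * 1 * (2 * δ) / (1 - δ - 2 * δ) := by
      gcongr
      · linarith [norm_nonneg z]
      · linarith [dist_nonneg (x := z) (y := z₀)]
    _ = 4 * δ / (1 - 3 * δ) := by ring

end Complex

theorem schwarz_type_lemma_harmonic :
    ∀ ε : ℝ, ε ∈ Set.Ioo (0 : ℝ) 1 → ∃ δ : ℝ, δ ∈ Set.Ioo (0 : ℝ) 1 ∧
      ∀ h : ℂ → ℂ, DifferentiableOn ℂ h (ball (0 : ℂ) 1) →
        (∀ z ∈ ball (0 : ℂ) 1, (h z).re ≤ 1) →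
        ∀ z₀ : ℂ, ‖z₀‖ ≤ δ → (h z₀).re = 0 →
        ∀ z : ℂ, ‖z‖ ≤ δ → (h z).re ≤ ε := by
  rintro ε ⟨hε0, hε1⟩
  refine ⟨ε / 8, ⟨by linarith, by linarith⟩, fun h hd hre z₀ hz₀ hhz₀ z hz ↦ ?_⟩
  calc (h z).re ≤ 4 * (ε / 8) / (1 - 3 * (ε / 8)) :=
        Complex.re_le_of_re_le_one_of_re_eq_zero (by linarith) hd hre hz₀ hhz₀ hz
    _ ≤ ε := by rw [div_le_iff₀ (by linarith)]; nlinarith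
end

section
/- Let f be a nonconstant polynomial with complex coefficients and g any polynomial with complex coefficients. For every continuous function φ : ℂ → ℝ, the function z ↦ Σ_w φ(g(w)), where the sum runs over the roots w of the polynomial f − z counted with multiplicity (the multiset (f − C z).roots in Lean), is continuous on ℂ. In particular the Perron–Frobenius operator Λ of the correspondence f ∘ g⁻¹ maps continuous functions to continuous functions. -/
open Polynomial Filter Topology Metric Bornology

theorem trace_continuous
    (f g : Polynomial ℂ) (hf : 1 ≤ f.degree)
    (φ : ℂ → ℝ) (hφ : Continuous φ) :
    Continuous (fun z : ℂ => (((f - C z).roots).map (fun w => φ (g.eval w))).sum) := by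
  set n := f.natDegree with hn
  set a := f.leadingCoeff with ha
  set ψ : ℂ → ℝ := fun w => φ (g.eval w) with hψ
  have hψc : Continuous ψ := hφ.comp g.continuous
  have hdpos : (0 : WithBot ℕ) < f.degree := lt_of_lt_of_le (by norm_num) hf
  have ha0 : a ≠ 0 := fun h => (ne_zero_of_degree_gt hdpos) (leadingCoeff_eq_zero.mp h)
  have hn1 : 0 < n := natDegree_pos_iff_degree_pos.mpr hdpos
  have hdeg : ∀ z : ℂ, (f - C z).degree = f.degree := fun z =>
    degree_sub_eq_left_of_degree_lt (lt_of_le_of_lt degree_C_le hdpos)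
  have hne : ∀ z : ℂ, f - C z ≠ 0 := by
    intro z h
    have h2 := hdeg z
    rw [h, degree_zero] at h2
    exact absurd h2.symm (ne_of_gt (lt_of_le_of_lt bot_le hdpos))
  have hnd : ∀ z : ℂ, (f - C z).natDegree = n := fun z => natDegree_eq_of_degree_eq (hdeg z)
  have hlc : ∀ z : ℂ, (f - C z).leadingCoeff = a := by
    intro z
    rw [leadingCoeff, hnd z, coeff_sub, coeff_C, if_neg (by omega), sub_zero]
    rfl
  have hcard : ∀ z : ℂ, Multiset.card (f - C z).roots = n := by
    intro z
    rw [← hnd z]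
    exact (splits_iff_card_roots.mp (IsAlgClosed.splits _))
  -- the trace function
  rw [continuous_iff_seqContinuous]
  intro u z hu
  apply Filter.tendsto_of_subseq_tendsto
  intro ns hns
  -- root vectors of f - C (u (ns k))
  have hlen : ∀ k, ((f - C (u (ns k))).roots.toList).length = n := fun k => by
    rw [Multiset.length_toList, hcard]
  set r : ℕ → Fin n → ℂ :=
    fun k i => ((f - C (u (ns k))).roots.toList).get (Fin.cast (hlen k).symm i) with hr
  have hroots_eq : ∀ k, (f - C (u (ns k))).roots = ↑(List.ofFn (r k)) := by
    intro k
    rw [← Multiset.coe_toList (f - C (u (ns k))).roots]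
    congr 1
    refine (List.ext_get (by simp [hlen]) ?_).symm
    intro i h1 h2
    simp [hr]
  have hmem : ∀ k i, r k i ∈ (f - C (u (ns k))).roots := by
    intro k i
    rw [hroots_eq k]
    simp only [Multiset.mem_coe, List.mem_ofFn]
    exact ⟨i, rfl⟩
  have hroot_val : ∀ k i, f.eval (r k i) = u (ns k) := by
    intro k i
    have := isRoot_of_mem_roots (hmem k i)
    simpa [IsRoot, sub_eq_zero] using this
  -- factorization
  have hfact : ∀ k, f - C (u (ns k)) = C a * ∏ i, (X - C (r k i)) := by
    intro k
    have h1 := C_leadingCoeff_mul_prod_multiset_X_sub_C (p := f - C (u (ns k)))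
      (by rw [hcard, hnd])
    rw [hlc] at h1
    rw [← h1, hroots_eq k]
    congr 1
    rw [Multiset.map_coe, List.map_ofFn, Multiset.prod_coe, List.prod_ofFn]
    rfl
  -- roots are uniformly bounded
  obtain ⟨B, hB⟩ : ∃ B : ℝ, ∀ k, ‖u k‖ ≤ B := by
    obtain ⟨B, hB⟩ := (hu.norm).bddAbove_range
    exact ⟨B, fun k => hB ⟨k, rfl⟩⟩
  have hbdd : IsBounded {w : ℂ | ‖f.eval w‖ ≤ B} := by
    rw [isBounded_def]
    have hT : Tendsto (fun w : ℂ => ‖f.eval w‖) (cobounded ℂ) atTop :=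
      f.tendsto_norm_atTop hdpos (by simpa using tendsto_norm_cobounded_atTop)
    filter_upwards [hT.eventually (eventually_gt_atTop B)] with w hw
    simpa using not_le.mpr hw
  obtain ⟨R, hR⟩ := hbdd.subset_closedBall 0
  have hrball : ∀ k i, r k i ∈ closedBall (0 : ℂ) R := by
    intro k i
    exact hR (by simpa [hroot_val k i] using hB (ns k))
  -- compactness : convergent subsequence of root vectors
  obtain ⟨v, -, σ, hσ, hvlim⟩ :=
    (isCompact_univ_pi fun _ : Fin n => isCompact_closedBall (0 : ℂ) R).tendsto_subseq
      (x := r) (fun k => by simp only [Set.mem_univ_pi]; exact fun i => hrball k i)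
  have huσ : Tendsto (fun j => u (ns (σ j))) atTop (𝓝 z) :=
    (hu.comp hns).comp hσ.tendsto_atTop
  have hvlim' : ∀ i, Tendsto (fun j => r (σ j) i) atTop (𝓝 (v i)) := by
    intro i
    exact (tendsto_pi_nhds.mp hvlim) i
  -- limit factorization
  have hlim : f - C z = C a * ∏ i, (X - C (v i)) := by
    apply Polynomial.funext
    intro w
    have hseq : ∀ j, f.eval w - u (ns (σ j)) = a * ∏ i, (w - r (σ j) i) := by
      intro j
      have := congrArg (Polynomial.eval w) (hfact (σ j))
      simpa [eval_prod] using this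
    have h1 : Tendsto (fun j => f.eval w - u (ns (σ j))) atTop (𝓝 (f.eval w - z)) :=
      tendsto_const_nhds.sub huσ
    have h2 : Tendsto (fun j => a * ∏ i, (w - r (σ j) i)) atTop
        (𝓝 (a * ∏ i, (w - v i))) := by
      apply Tendsto.const_mul
      exact tendsto_finset_prod _ fun i _ => tendsto_const_nhds.sub (hvlim' i)
    have := tendsto_nhds_unique (h1.congr fun j => hseq j) h2
    simp [eval_prod, this]
  have hroots_lim : (f - C z).roots = Multiset.map v Finset.univ.val := by
    rw [hlim, roots_C_mul _ ha0, Finset.prod_eq_multiset_prod]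
    have : Multiset.map (fun i => X - C (v i)) Finset.univ.val
        = Multiset.map (fun b => X - C b) (Multiset.map v Finset.univ.val) := by
      rw [Multiset.map_map]; rfl
    rw [this, roots_multiset_prod_X_sub_C]
  -- conclude
  refine ⟨σ, ?_⟩
  have hgoal_eq : ∀ j, (((f - C (u (ns (σ j)))).roots).map ψ).sum = ∑ i, ψ (r (σ j) i) := by
    intro j
    rw [hroots_eq (σ j), Multiset.map_coe, List.map_ofFn, Multiset.sum_coe, List.sum_ofFn]
    rfl
  have hlim_eq : (((f - C z).roots).map ψ).sum = ∑ i, ψ (v i) := by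
    rw [hroots_lim, Multiset.map_map, Finset.sum_eq_multiset_sum]
    rfl
  simp only [hlim_eq]
  refine (tendsto_finset_sum _ fun i _ => ((hψc.tendsto _).comp (hvlim' i))).congr fun j => ?_
  exact (hgoal_eq j).symm
end

section
/- Let f be a nonconstant polynomial with complex coefficients and ψ : ℂ → ℂ an entire function. Then the trace function z ↦ Σ_w ψ(w), where the sum runs over the roots w of the polynomial f − z counted with multiplicity (the multiset (f − C z).roots in Lean), is an entire function of z (complex differentiable on all of ℂ). -/
/-!
On a circle `|w| = R` on which `|f|` exceeds `|z₀| + 1`, every `z` near `z₀` has all roots of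
`f - z` inside the disc, so the argument principle for `f - z` weighted by `ψ` gives
`∑ ψ(r) = (2πi)⁻¹ ∮ ψ(w) f'(w) / (f(w) - z) dw`. The right-hand side is holomorphic in `z`:
differentiate under the integral, the kernel `(f(w) - z)⁻¹` staying bounded since `f(w)` keeps
away from `z₀` on the circle.
-/

open Polynomial Metric Filter MeasureTheory
open scoped Topology Real

theorem hasDerivAt_integral_mul_inv_sub {α : Type*} [MeasurableSpace α] {μ : Measure α}
    {g h : α → ℂ} (hg : Integrable g μ) (hh : AEStronglyMeasurable h μ) {z₀ : ℂ} {δ : ℝ}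
    (hδ : 0 < δ) (hsep : ∀ x, δ ≤ ‖h x - z₀‖) :
    HasDerivAt (fun z => ∫ x, g x * (h x - z)⁻¹ ∂μ) (∫ x, g x * ((h x - z₀) ^ 2)⁻¹ ∂μ) z₀ := by
  have hsep' : ∀ x, ∀ z ∈ ball z₀ (δ / 2), δ / 2 ≤ ‖h x - z‖ := fun x z hz => by
    have := norm_sub_norm_le (h x - z₀) (z - z₀)
    rw [sub_sub_sub_cancel_right] at this
    linarith [hsep x, mem_ball_iff_norm.1 hz]
  have hne : ∀ x, ∀ z ∈ ball z₀ (δ / 2), h x - z ≠ 0 := fun x z hz =>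
    norm_pos_iff.1 ((half_pos hδ).trans_le (hsep' x z hz))
  have hinv : ∀ x, ∀ z ∈ ball z₀ (δ / 2), ‖(h x - z)⁻¹‖ ≤ (δ / 2)⁻¹ := fun x z hz => by
    rw [norm_inv]
    exact inv_anti₀ (half_pos hδ) (hsep' x z hz)
  have hmeas : ∀ z, AEStronglyMeasurable (fun x => (h x - z)⁻¹) μ := fun z =>
    (hh.sub aestronglyMeasurable_const).aemeasurable.inv.aestronglyMeasurable
  have hbound : ∀ x, ∀ z ∈ ball z₀ (δ / 2),
      ‖g x * ((h x - z) ^ 2)⁻¹‖ ≤ ‖g x‖ * (δ / 2)⁻¹ ^ 2 := fun x z hz => by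
    rw [norm_mul, ← inv_pow, norm_pow]
    gcongr
    exact hinv x z hz
  have hderiv : ∀ x, ∀ z ∈ ball z₀ (δ / 2),
      HasDerivAt (fun z => g x * (h x - z)⁻¹) (g x * ((h x - z) ^ 2)⁻¹) z := fun x z hz => by
    simpa using (((hasDerivAt_id z).const_sub (h x)).inv (hne x z hz)).const_mul (g x)
  have hz₀ : z₀ ∈ ball z₀ (δ / 2) := mem_ball_self (half_pos hδ)
  exact (hasDerivAt_integral_of_dominated_loc_of_deriv_le (ball_mem_nhds z₀ (half_pos hδ))
    (Eventually.of_forall fun z => hg.1.mul (hmeas z))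
    (hg.mul_bdd (hmeas z₀) (ae_of_all _ fun x => hinv x z₀ hz₀))
    (hg.1.mul ((hh.sub aestronglyMeasurable_const).pow 2).aemeasurable.inv.aestronglyMeasurable)
    (ae_of_all _ hbound) (hg.norm.mul_const _) (ae_of_all _ hderiv)).2

theorem differentiableAt_circleIntegral_mul_inv_sub {g h : ℂ → ℂ} {c : ℂ} {R : ℝ} (hR : 0 ≤ R)
    (hg : CircleIntegrable g c R) (hh : ContinuousOn h (sphere c R)) {z₀ : ℂ}
    (hz₀ : z₀ ∉ h '' sphere c R) :
    DifferentiableAt ℂ (fun z => ∮ w in C(c, R), g w * (h w - z)⁻¹) z₀ := by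
  obtain ⟨δ, hδ, hball⟩ := Metric.isOpen_iff.1
    ((isCompact_sphere c R).image_of_continuousOn hh).isClosed.isOpen_compl z₀ hz₀
  have hsep : ∀ θ, δ ≤ ‖h (circleMap c R θ) - z₀‖ := fun θ => by
    by_contra! hlt
    exact hball (mem_ball_iff_norm.2 hlt) ⟨_, circleMap_mem_sphere c hR θ, rfl⟩
  have hparam : (fun z => ∮ w in C(c, R), g w * (h w - z)⁻¹) = fun z =>
      ∫ θ in Set.Ioc 0 (2 * π), deriv (circleMap c R) θ • g (circleMap c R θ) *
        (h (circleMap c R θ) - z)⁻¹ := by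
    funext z
    simp only [circleIntegral, intervalIntegral.integral_of_le Real.two_pi_pos.le, smul_eq_mul,
      mul_assoc]
  rw [hparam]
  exact (hasDerivAt_integral_mul_inv_sub hg.out.1
    (hh.comp_continuous (continuous_circleMap c R)
      (circleMap_mem_sphere c hR)).aestronglyMeasurable hδ hsep).differentiableAt

theorem circleIntegral.integral_multiset_sum_map {E ι : Type*} [NormedAddCommGroup E]
    [NormedSpace ℂ E] {s : Multiset ι} {f : ι → ℂ → E} {c : ℂ} {R : ℝ}
    (h : ∀ i ∈ s, CircleIntegrable (f i) c R) :
    (∮ z in C(c, R), (s.map fun i => f i z).sum) = (s.map fun i => ∮ z in C(c, R), f i z).sum := by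
  classical
  have hsum : ∀ g : ι → E, (s.map g).sum = ∑ i : s, g i :=
    fun g => by rw [Finset.sum_eq_multiset_sum, Multiset.map_univ]
  simp_rw [hsum]
  exact circleIntegral.integral_fun_sum fun i _ => h i Multiset.coe_mem

theorem Polynomial.circleIntegral_mul_derivative_div_eq_sum_roots {p : ℂ[X]} {ψ : ℂ → ℂ}
    {c : ℂ} {R : ℝ} (hψ : DifferentiableOn ℂ ψ (closedBall c R))
    (hroots : ∀ r ∈ p.roots, r ∈ ball c R) :
    (∮ w in C(c, R), ψ w * p.derivative.eval w / p.eval w) =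
      2 * π * Complex.I * (p.roots.map ψ).sum := by
  rcases p.roots.empty_or_exists_mem with hp | ⟨r₀, hr₀⟩
  · rw [IsAlgClosed.roots_eq_zero_iff.1 hp]
    simp [circleIntegral]
  have hR : 0 < R := pos_of_mem_ball (hroots r₀ hr₀)
  have hnotroot : ∀ r ∈ p.roots, ∀ w ∈ sphere c R, w - r ≠ 0 := fun r hr w hw h => by
    rw [sub_eq_zero.1 h, mem_sphere] at hw
    exact (mem_ball.1 (hroots r hr)).ne hw
  have heval : ∀ w ∈ sphere c R, p.eval w ≠ 0 := fun w hw h =>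
    hnotroot w ((mem_roots (ne_zero_of_mem_roots hr₀)).2 h) w hw (sub_self w)
  calc (∮ w in C(c, R), ψ w * p.derivative.eval w / p.eval w)
      = ∮ w in C(c, R), (p.roots.map fun r => (w - r)⁻¹ • ψ w).sum :=
        circleIntegral.integral_congr hR.le fun w hw => by
          simp only [mul_div_assoc, (IsAlgClosed.splits p).eval_derivative_div_eval_of_ne_zero
            (heval w hw), ← Multiset.sum_map_mul_left, smul_eq_mul, one_div, mul_comm]
    _ = (p.roots.map fun r => ∮ w in C(c, R), (w - r)⁻¹ • ψ w).sum :=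
        circleIntegral.integral_multiset_sum_map fun r hr =>
          ContinuousOn.circleIntegrable hR.le <|
            ((continuousOn_id.sub continuousOn_const).inv₀ (hnotroot r hr)).smul
              (hψ.continuousOn.mono sphere_subset_closedBall)
    _ = (p.roots.map fun r => (2 * π * Complex.I : ℂ) • ψ r).sum :=
        congrArg _ (Multiset.map_congr rfl fun r hr => hψ.circleIntegral_sub_inv_smul (hroots r hr))
    _ = 2 * π * Complex.I * (p.roots.map ψ).sum := by
        simp only [smul_eq_mul, Multiset.sum_map_mul_left]

theorem Polynomial.exists_pos_forall_lt_norm_eval {𝕜 : Type*} [NormedField 𝕜] {f : 𝕜[X]}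
    (hf : 0 < f.degree) (M : ℝ) : ∃ R > 0, ∀ w : 𝕜, R ≤ ‖w‖ → M < ‖f.eval w‖ := by
  obtain ⟨R, -, hR⟩ := hasBasis_cobounded_norm.eventually_iff.1
    ((f.tendsto_norm_atTop hf tendsto_norm_cobounded_atTop).eventually_gt_atTop M)
  exact ⟨max R 1, by positivity, fun w hw => hR (le_of_max_le_left hw)⟩

theorem trace_entire
    (f : Polynomial ℂ) (hf : 1 ≤ f.degree)
    (ψ : ℂ → ℂ) (hψ : Differentiable ℂ ψ) :
    Differentiable ℂ (fun z : ℂ => (((f - C z).roots).map ψ).sum) := by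
  intro z₀
  obtain ⟨R, hR, hfR⟩ := f.exists_pos_forall_lt_norm_eval (zero_lt_one.trans_le hf) (‖z₀‖ + 1)
  have hne : ∀ z ∈ ball z₀ 1, ∀ w : ℂ, R ≤ ‖w‖ → f.eval w ≠ z := fun z hz w hw heq => by
    have hlarge := hfR w hw
    rw [heq] at hlarge
    linarith [norm_le_norm_add_norm_sub' z z₀, mem_ball_iff_norm.1 hz]
  have htrace : (fun z => ((f - C z).roots.map ψ).sum) =ᶠ[𝓝 z₀] fun z =>
      (2 * π * Complex.I)⁻¹ * ∮ w in C(0, R), ψ w * (derivative f).eval w * (f.eval w - z)⁻¹ := by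
    filter_upwards [ball_mem_nhds z₀ one_pos] with z hz
    have hroots : ∀ r ∈ (f - C z).roots, r ∈ ball 0 R := fun r hr => by
      refine mem_ball_zero_iff.2 (not_le.1 fun hr' => hne z hz r hr' ?_)
      simpa [sub_eq_zero] using isRoot_of_mem_roots hr
    have := (f - C z).circleIntegral_mul_derivative_div_eq_sum_roots hψ.differentiableOn hroots
    simp only [derivative_sub, derivative_C, sub_zero, eval_sub, eval_C, div_eq_mul_inv] at this
    rw [this, inv_mul_cancel_left₀ Complex.two_pi_I_ne_zero]
  refine (DifferentiableAt.const_mul ?_ _).congr_of_eventuallyEq htrace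
  refine differentiableAt_circleIntegral_mul_inv_sub hR.le ?_ f.continuous.continuousOn ?_
  · exact ContinuousOn.circleIntegrable hR.le
      (hψ.continuous.mul (derivative f).continuous).continuousOn
  · rintro ⟨w, hw, heq⟩
    exact hne z₀ (mem_ball_self one_pos) w (by simp [mem_sphere_zero_iff_norm.1 hw]) heq
end
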